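/- Let A be a commutative ring. Then A is a reduced mp-ring if and only if the set of minimal prime ideals of A coincides with the set of purely-prime ideals of A (i.e., an ideal of A is a minimal prime if and only if it is purely-prime). -/

import Mathlib

variable {A : Type*} [CommRing A]

/-- An ideal `I` is pure if for every `f ∈ I` there exists `g ∈ I` with `f * (1 - g) = 0`. -/
def Ideal.IsPure (I : Ideal A) : Prop :=
  ∀ f ∈ I, ∃ g ∈ I, f * (1 - g) = 0

/-- The pure part `ν(I)`: the largest pure ideal contained in `I`
(the sum of all pure ideals contained in `I`). -/
def Ideal.purePart (I : Ideal A) : Ideal A :=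
  sSup {J : Ideal A | J.IsPure ∧ J ≤ I}

/-- A purely-prime ideal: a proper pure ideal `P` such that whenever `I`, `J` are pure ideals
with `I * J ≤ P`, either `I ≤ P` or `J ≤ P`. -/
def Ideal.IsPurelyPrime (P : Ideal A) : Prop :=
  P.IsPure ∧ P ≠ ⊤ ∧
    ∀ I J : Ideal A, I.IsPure → J.IsPure → I * J ≤ P → I ≤ P ∨ J ≤ P

/-- A purely-maximal ideal: a maximal element of the set of proper pure ideals. -/
def Ideal.IsPurelyMaximal (P : Ideal A) : Prop :=
  P.IsPure ∧ P ≠ ⊤ ∧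
    ∀ Q : Ideal A, Q.IsPure → Q ≠ ⊤ → P ≤ Q → P = Q

/-- A Gelfand ring: every prime ideal is contained in a unique maximal ideal. -/
def IsGelfandRing (A : Type*) [CommRing A] : Prop :=
  ∀ p : Ideal A, p.IsPrime → ∃! m : Ideal A, m.IsMaximal ∧ p ≤ m

/-- An mp-ring: every prime ideal contains a unique minimal prime ideal. -/
def IsMpRing (A : Type*) [CommRing A] : Prop :=
  ∀ p : Ideal A, p.IsPrime → ∃! q : Ideal A, q ∈ minimalPrimes A ∧ q ≤ p

/-- The kernel of the canonical map `A → A_p` to the localization at a prime `p`. -/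
def Ideal.kerPi (p : Ideal A) (hp : p.IsPrime) : Ideal A :=
  letI := hp
  RingHom.ker (algebraMap A (Localization.AtPrime p))

/-- The unit part `u(I) = {f : f = f * g for some g ∈ I}`. -/
def Ideal.unitPart (I : Ideal A) : Ideal A where
  carrier := {f | ∃ g ∈ I, f = f * g}
  zero_mem' := ⟨0, I.zero_mem, by ring⟩
  add_mem' := by
    rintro a b ⟨g, hg, ha⟩ ⟨h, hh, hb⟩
    exact ⟨g + h - g * h, I.sub_mem (I.add_mem hg hh) (I.mul_mem_right h hg),
      by linear_combination (1 - h) * ha + (1 - g) * hb⟩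
  smul_mem' := by
    rintro c a ⟨g, hg, ha⟩
    exact ⟨g, hg, by rw [smul_eq_mul]; linear_combination c * ha⟩

/-!
A pure ideal `I` lies in the kernel of `A → A_m` for every prime `m ⊇ I`, and an ideal
with this property for all maximal `m` is pure. In a reduced mp-ring, `A_m` is reduced with a
single minimal prime, so the kernel of `A → A_m` is exactly the minimal prime `p` below `m`. Hence
minimal primes and annihilators `Ann(x)` are pure. A purely-prime `P` inside a maximal `m` then
lies in `p`; and for `x ∈ p`, write `x = x g` with `g ∈ p`: the pure ideals `Ann(g)` and
`Ann(1 - g)` have product zero, `Ann(g) ⊄ p`, so `x ∈ Ann(1 - g) ⊆ P`.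

Conversely, if every minimal prime is pure, a minimal prime below a prime `r` lies in the kernel of
`A → A_r`, hence in every prime below `r`, so it is the only one; and a nilpotent lies in all
minimal primes, hence vanishes in every `A_m`.
-/

open Submodule (annihilator mem_annihilator_span_singleton)

namespace Ideal

theorem mem_kerPi {p : Ideal A} (hp : p.IsPrime) {f : A} :
    f ∈ p.kerPi hp ↔ ∃ s ∉ p, s * f = 0 := by
  let := hp
  change algebraMap A (Localization.AtPrime p) f = 0 ↔ _
  rw [IsLocalization.map_eq_zero_iff p.primeCompl]
  exact ⟨fun ⟨s, hs⟩ => ⟨s, s.2, hs⟩, fun ⟨s, hs, hsf⟩ => ⟨⟨s, hs⟩, hsf⟩⟩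

theorem kerPi_le_of_le {p q : Ideal A} (hp : p.IsPrime) (hq : q.IsPrime) (hqp : q ≤ p) :
    p.kerPi hp ≤ q := fun f hf => by
  obtain ⟨s, hs, hsf⟩ := (mem_kerPi hp).1 hf
  exact (hq.mem_or_mem (hsf ▸ q.zero_mem)).resolve_left fun h => hs (hqp h)

theorem IsPure.le_kerPi {I p : Ideal A} (hI : I.IsPure) (hp : p.IsPrime) (hIp : I ≤ p) :
    I ≤ p.kerPi hp := fun f hf => by
  obtain ⟨g, hg, hfg⟩ := hI f hf
  refine (mem_kerPi hp).2 ⟨1 - g, fun h => hp.ne_top ?_, by rw [mul_comm, hfg]⟩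
  exact (eq_top_iff_one p).2 (by simpa using p.add_mem h (hIp hg))

theorem isPure_of_forall_le_kerPi {I : Ideal A}
    (h : ∀ (m : Ideal A) (hm : m.IsMaximal), I ≤ m → I ≤ m.kerPi hm.isPrime) : I.IsPure := by
  intro f hf
  suffices annihilator (A ∙ f) ⊔ I = ⊤ by
    obtain ⟨u, hu, g, hg, hug⟩ := Submodule.mem_sup.1 (this ▸ Submodule.mem_top : (1 : A) ∈ _)
    rw [mem_annihilator_span_singleton, smul_eq_mul] at hu
    exact ⟨g, hg, by rw [← hug, add_sub_cancel_right, mul_comm, hu]⟩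
  by_contra hne
  obtain ⟨m, hm, hle⟩ := exists_le_maximal _ hne
  obtain ⟨s, hs, hsf⟩ := (mem_kerPi hm.isPrime).1 (h m hm (le_sup_right.trans hle) hf)
  exact hs (hle (mem_sup_left ((mem_annihilator_span_singleton f s).2 hsf)))

theorem eq_zero_of_forall_mem_kerPi {x : A}
    (h : ∀ (m : Ideal A) (hm : m.IsMaximal), x ∈ m.kerPi hm.isPrime) : x = 0 := by
  rw [← Submodule.span_singleton_eq_bot (R := A), ← Submodule.annihilator_eq_top_iff]
  by_contra hne
  obtain ⟨m, hm, hle⟩ := exists_le_maximal _ hne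
  obtain ⟨s, hs, hsx⟩ := (mem_kerPi hm.isPrime).1 (h m hm)
  exact hs (hle ((mem_annihilator_span_singleton x s).2 hsx))

theorem IsPrime.isPurelyPrime {p : Ideal A} (hp : p.IsPrime) (hpure : p.IsPure) :
    p.IsPurelyPrime :=
  ⟨hpure, hp.ne_top, fun _ _ _ _ h => hp.mul_le.1 h⟩

theorem annihilator_mul_annihilator_one_sub (g : A) :
    annihilator (A ∙ g) * annihilator (A ∙ (1 - g)) = ⊥ := by
  refine eq_bot_iff.2 (mul_le.2 fun b hb c hc => ?_)
  rw [mem_annihilator_span_singleton, smul_eq_mul] at hb hc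
  rw [mem_bot]
  linear_combination c * hb + b * hc

end Ideal

open Ideal

namespace IsMpRing

variable [IsReduced A]

theorem kerPi_eq_of_mem_minimalPrimes (hA : IsMpRing A) {p m : Ideal A}
    (hp : p ∈ minimalPrimes A) (hm : m.IsPrime) (hpm : p ≤ m) : m.kerPi hm = p := by
  refine le_antisymm (kerPi_le_of_le hm hp.isPrime hpm) fun a ha => ?_
  let := hm
  let B := Localization.AtPrime m
  rw [kerPi, RingHom.mem_ker, ← mem_bot, ← radical_bot_of_isReduced, ← sInf_minimalPrimes,
    Submodule.mem_sInf]
  intro Q hQ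
  have hQmin : Ideal.comap (algebraMap A B) Q ∈ minimalPrimes A := by
    rwa [← Ideal.map_bot (f := algebraMap A B),
      IsLocalization.minimalPrimes_map m.primeCompl B] at hQ
  have hQm : Ideal.comap (algebraMap A B) Q ≤ m :=
    (comap_mono (IsLocalRing.le_maximalIdeal hQ.isPrime.ne_top)).trans
      (IsLocalization.AtPrime.under_maximalIdeal B m).le
  obtain ⟨q, -, huniq⟩ := hA m hm
  rwa [← mem_comap, (huniq _ ⟨hQmin, hQm⟩).trans (huniq _ ⟨hp, hpm⟩).symm]

theorem isPure_of_mem_minimalPrimes (hA : IsMpRing A) {p : Ideal A}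
    (hp : p ∈ minimalPrimes A) : p.IsPure :=
  isPure_of_forall_le_kerPi fun _ hm hpm =>
    (hA.kerPi_eq_of_mem_minimalPrimes hp hm.isPrime hpm).ge

theorem isPure_annihilator_span_singleton (hA : IsMpRing A) (x : A) :
    (annihilator (A ∙ x)).IsPure := by
  refine isPure_of_forall_le_kerPi fun m hm hle => ?_
  obtain ⟨q, hq, hqm⟩ := exists_minimalPrimes_le (bot_le : ⊥ ≤ m)
  have hker := hA.kerPi_eq_of_mem_minimalPrimes hq hm.isPrime hqm
  have hxq : x ∉ q := fun hx => by
    obtain ⟨s, hs, hsx⟩ := (mem_kerPi hm.isPrime).1 (hker.ge hx)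
    exact hs (hle ((mem_annihilator_span_singleton x s).2 hsx))
  rw [hker]
  intro a ha
  rw [mem_annihilator_span_singleton, smul_eq_mul] at ha
  exact (hq.isPrime.mem_or_mem (ha ▸ q.zero_mem)).resolve_right hxq

theorem mem_minimalPrimes_of_isPurelyPrime (hA : IsMpRing A) {P : Ideal A}
    (hP : P.IsPurelyPrime) : P ∈ minimalPrimes A := by
  obtain ⟨hPpure, hPtop, hPprime⟩ := hP
  obtain ⟨m, hm, hPm⟩ := exists_le_maximal P hPtop
  obtain ⟨p, hp, hpm⟩ := exists_minimalPrimes_le (bot_le : ⊥ ≤ m)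
  have hPp : P ≤ p :=
    hA.kerPi_eq_of_mem_minimalPrimes hp hm.isPrime hpm ▸ hPpure.le_kerPi hm.isPrime hPm
  suffices p ≤ P from le_antisymm hPp this ▸ hp
  intro x hx
  obtain ⟨g, hg, hxg⟩ := hA.isPure_of_mem_minimalPrimes hp x hx
  rcases hPprime _ _ (hA.isPure_annihilator_span_singleton g)
      (hA.isPure_annihilator_span_singleton (1 - g))
      ((annihilator_mul_annihilator_one_sub g).trans_le bot_le) with hgP | hgP
  · have hpker := hA.kerPi_eq_of_mem_minimalPrimes hp hp.isPrime le_rfl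
    obtain ⟨s, hs, hsg⟩ := (mem_kerPi hp.isPrime).1 (hpker.ge hg)
    exact absurd (hPp (hgP ((mem_annihilator_span_singleton g s).2 hsg))) hs
  · refine hgP ((mem_annihilator_span_singleton _ x).2 ?_)
    rw [smul_eq_mul]
    linear_combination hxg

end IsMpRing

theorem isReduced_of_forall_isPure (h : ∀ p ∈ minimalPrimes A, p.IsPure) : IsReduced A :=
  ⟨fun x ⟨n, hn⟩ => eq_zero_of_forall_mem_kerPi fun m hm => by
    obtain ⟨q, hq, hqm⟩ := exists_minimalPrimes_le (bot_le : ⊥ ≤ m)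
    exact (h q hq).le_kerPi hm.isPrime hqm (hq.isPrime.mem_of_pow_mem n (hn ▸ q.zero_mem))⟩

theorem isMpRing_of_forall_isPure (h : ∀ p ∈ minimalPrimes A, p.IsPure) : IsMpRing A := by
  intro r hr
  obtain ⟨q, hq, hqr⟩ := exists_minimalPrimes_le (bot_le : ⊥ ≤ r)
  refine ⟨q, ⟨hq, hqr⟩, fun q' ⟨hq', hq'r⟩ => ?_⟩
  have hle : q' ≤ q := ((h q' hq').le_kerPi hr hq'r).trans (kerPi_le_of_le hr hq.isPrime hqr)
  exact le_antisymm hle (hq.2 hq'.1 hle)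

/-- `A` is a reduced mp-ring iff the minimal primes of `A` are exactly
the purely-prime ideals of `A`. -/
theorem isReduced_and_isMpRing_iff_minimalPrimes_eq_purelyPrime :
    (IsReduced A ∧ IsMpRing A) ↔
      ∀ I : Ideal A, I ∈ minimalPrimes A ↔ I.IsPurelyPrime := by
  constructor
  · rintro ⟨hR, hA⟩ I
    exact ⟨fun hI => hI.1.1.isPurelyPrime (hA.isPure_of_mem_minimalPrimes hI),
      hA.mem_minimalPrimes_of_isPurelyPrime⟩
  · intro h
    have hpure : ∀ p ∈ minimalPrimes A, p.IsPure := fun p hp => ((h p).1 hp).1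
    exact ⟨isReduced_of_forall_isPure hpure, isMpRing_of_forall_isPure hpure⟩
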